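/- For every natural number l, the Bell number satisfies e · B_l = Σ_{i=0}^{∞} i^l / i! (Dobinski's formula), and in particular B_l ≥ 4^l / (e · 4!). -/

import Mathlib

/-!
Removing the class of a distinguished point turns a partition of an `(n+1)`-set into a subset `s` of
the other `n` points (the rest of that class) together with a partition of the complement of `s`,
so `B (n+1) = ∑ₖ C(n,k) B (n-k)`. Expanding `(1 + j)ⁿ` binomially shows that
`Dₗ = ∑ᵢ iˡ / i!` satisfies the same recurrence, and `D₀ = e = e · B₀`. Dropping all terms of
`Dₗ` but `i = 4` gives the lower bound.
-/

/-- The `l`-th Bell number: the number of partitions (equivalently, equivalence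
relations) of a set with `l` elements. -/
noncomputable def bellNumber (l : ℕ) : ℕ := Nat.card (Setoid (Fin l))

open Finset Nat

namespace Setoid

variable {α β : Type*}

instance [Finite α] : Finite (Setoid α) :=
  Finite.of_injective (fun r : Setoid α => ⇑r) fun _ _ => eq_iff_rel_eq.mpr

noncomputable def optionQuotient (s : Set β) (q : Setoid ↥sᶜ) : Option β → Option (Quotient q) :=
  open Classical in
  fun a => a.bind fun x => if hx : x ∈ s then none else some (Quotient.mk q ⟨x, hx⟩)

/-- The partition of `Option β` whose classes are `insert none s` and the classes of `q`. -/
noncomputable def extendOption (s : Set β) (q : Setoid ↥sᶜ) : Setoid (Option β) :=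
  ker (optionQuotient s q)

lemma extendOption_rel {s : Set β} {q : Setoid ↥sᶜ} {a b : Option β} :
    extendOption s q a b ↔ optionQuotient s q a = optionQuotient s q b :=
  Iff.rfl

def classOfNone (r : Setoid (Option β)) : Set β := {x | r (some x) none}

lemma classOfNone_extendOption (s : Set β) (q : Setoid ↥sᶜ) :
    classOfNone (extendOption s q) = s := by
  ext x
  by_cases hx : x ∈ s <;> simp [classOfNone, extendOption_rel, optionQuotient, hx]

lemma comap_some_extendOption (s : Set β) (q : Setoid ↥sᶜ) :
    (extendOption s q).comap (fun x : ↥sᶜ => some x.1) = q := by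
  ext ⟨x, hx : x ∉ s⟩ ⟨y, hy : y ∉ s⟩
  simp [extendOption_rel, optionQuotient, comap_rel, hx, hy, Quotient.eq]

lemma extendOption_classOfNone (r : Setoid (Option β)) :
    extendOption (classOfNone r) (r.comap fun x => some x.1) = r := by
  ext (_ | x) (_ | y)
  · exact iff_of_true rfl (r.refl' _)
  · rw [r.comm']
    by_cases hy : r (some y) none <;> simp [extendOption_rel, optionQuotient, classOfNone, hy]
  · by_cases hx : r (some x) none <;> simp [extendOption_rel, optionQuotient, classOfNone, hx]
  · by_cases hx : r (some x) none <;> by_cases hy : r (some y) none <;>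
      simp [extendOption_rel, optionQuotient, classOfNone, hx, hy, Quotient.eq, comap_rel]
    · exact r.trans' hx (r.symm' hy)
    · exact fun h => hy (r.trans' (r.symm' h) hx)
    · exact fun h => hx (r.trans' h hy)

noncomputable def classOfNoneFiberEquiv (s : Set β) :
    {r : Setoid (Option β) // classOfNone r = s} ≃ Setoid ↥sᶜ where
  toFun r := r.1.comap fun x => some x.1
  invFun q := ⟨extendOption s q, classOfNone_extendOption s q⟩
  left_inv := by
    rintro ⟨r, rfl⟩
    exact Subtype.ext (extendOption_classOfNone r)
  right_inv := comap_some_extendOption s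

noncomputable def optionEquivSigma (β : Type*) : Setoid (Option β) ≃ Σ s : Set β, Setoid ↥sᶜ :=
  (Equiv.sigmaFiberEquiv classOfNone).symm.trans (Equiv.sigmaCongrRight classOfNoneFiberEquiv)

end Setoid

def Equiv.setoidCongr {α β : Type*} (e : α ≃ β) : Setoid α ≃ Setoid β where
  toFun r := r.comap e.symm
  invFun r := r.comap e
  left_inv r := Setoid.ext fun a b => by simp [Setoid.comap_rel]
  right_inv r := Setoid.ext fun a b => by simp [Setoid.comap_rel]

lemma Nat.card_setoid_eq_bellNumber (α : Type*) [Finite α] :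
    Nat.card (Setoid α) = bellNumber (Nat.card α) :=
  Nat.card_congr (Finite.equivFin α).setoidCongr

lemma bellNumber_zero : bellNumber 0 = 1 := by
  rw [bellNumber, Nat.card_eq_one_iff_unique]
  exact ⟨⟨fun _ _ => Setoid.ext fun x => x.elim0⟩, ⟨⊥⟩⟩

lemma bellNumber_succ (n : ℕ) :
    bellNumber (n + 1) = ∑ k ∈ range (n + 1), n.choose k * bellNumber (n - k) :=
  calc bellNumber (n + 1) = Nat.card (Σ s : Set (Fin n), Setoid ↥sᶜ) :=
        Nat.card_congr ((finSuccEquiv n).setoidCongr.trans (Setoid.optionEquivSigma _))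
    _ = ∑ s : Set (Fin n), bellNumber (n - s.ncard) := by
        rw [Nat.card_sigma]
        congr! 1 with s
        rw [Nat.card_setoid_eq_bellNumber, Nat.card_coe_set_eq, Set.ncard_compl, Nat.card_fin]
    _ = ∑ t : Finset (Fin n), bellNumber (n - #t) :=
        (Fintype.sum_equiv Fintype.finsetEquivSet _ _ fun t => by simp).symm
    _ = _ := by
        rw [← powerset_univ, sum_powerset_apply_card fun k => bellNumber (n - k)]
        simp

lemma bellNumber_eq_bell (n : ℕ) : bellNumber n = n.bell := by
  induction n using Nat.strong_induction_on with
  | _ n ih =>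
    cases n with
    | zero => rw [bellNumber_zero, bell_zero]
    | succ n =>
      rw [bellNumber_succ, bell_succ, ← range_succ_eq_Iic]
      exact sum_congr rfl fun k hk => by rw [ih _ (by omega)]

lemma summable_natCast_pow_div_factorial (l : ℕ) : Summable fun i : ℕ => (i : ℝ) ^ l / i ! := by
  refine .of_nonneg_of_le (fun i => by positivity) (fun i => ?_)
    (Real.summable_pow_div_factorial (2 ^ l))
  gcongr
  calc (i : ℝ) ^ l ≤ ((2 : ℝ) ^ i) ^ l := by gcongr; exact_mod_cast i.lt_two_pow_self.le
    _ = ((2 : ℝ) ^ l) ^ i := by rw [← pow_mul, ← pow_mul, mul_comm]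

lemma tsum_natCast_pow_succ_div_factorial (n : ℕ) :
    ∑' i : ℕ, (i : ℝ) ^ (n + 1) / i ! =
      ∑ k ∈ range (n + 1), n.choose k * ∑' i : ℕ, (i : ℝ) ^ (n - k) / i ! :=
  calc ∑' i : ℕ, (i : ℝ) ^ (n + 1) / i ! = ∑' j : ℕ, (1 + j : ℝ) ^ n / j ! := by
        rw [(summable_natCast_pow_div_factorial _).tsum_eq_zero_add]
        simp only [CharP.cast_eq_zero, zero_pow n.succ_ne_zero, zero_div, zero_add]
        refine tsum_congr fun j => ?_
        rw [factorial_succ]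
        push_cast
        field_simp
        ring
    _ = ∑' j : ℕ, ∑ k ∈ range (n + 1), n.choose k * ((j : ℝ) ^ (n - k) / j !) :=
        tsum_congr fun j => by
          rw [add_pow, sum_div]
          exact sum_congr rfl fun k _ => by ring
    _ = _ := by
        rw [Summable.tsum_finsetSum fun k _ => (summable_natCast_pow_div_factorial _).mul_left _]
        simp_rw [tsum_mul_left]

theorem exp_one_mul_bell (l : ℕ) : Real.exp 1 * l.bell = ∑' i : ℕ, (i : ℝ) ^ l / i ! := by
  induction l using Nat.strong_induction_on with
  | _ l ih =>
    cases l with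
    | zero => simp [Real.exp_eq_exp_ℝ, NormedSpace.exp_eq_tsum_div]
    | succ n =>
      rw [bell_succ, ← range_succ_eq_Iic, tsum_natCast_pow_succ_div_factorial]
      push_cast
      rw [mul_sum]
      refine sum_congr rfl fun k hk => ?_
      rw [← ih (n - k) (by omega)]
      ring

/-- Dobinski's formula `e · B_l = ∑_{i=0}^∞ i^l / i!`, and consequently
`B_l ≥ 4^l / (e · 4!)`. -/
theorem stmt_5 (l : ℕ) :
    Real.exp 1 * bellNumber l = ∑' i : ℕ, (i : ℝ) ^ l / i.factorial ∧
    (bellNumber l : ℝ) ≥ 4 ^ l / (Real.exp 1 * 24) := by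
  have dobinski : Real.exp 1 * bellNumber l = ∑' i : ℕ, (i : ℝ) ^ l / i ! := by
    rw [bellNumber_eq_bell, exp_one_mul_bell]
  refine ⟨dobinski, ?_⟩
  have fourth_term : (4 : ℝ) ^ l / 24 ≤ Real.exp 1 * bellNumber l := by
    rw [dobinski]
    simpa [factorial] using
      (summable_natCast_pow_div_factorial l).le_tsum 4 fun j _ => by positivity
  rw [ge_iff_le, mul_comm, ← div_div, div_le_iff₀ (Real.exp_pos 1)]
  linarith
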